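/- Let ψ : ℕ → ℝ be a nonnegative sequence with Σ_{k=1}^∞ k·ψ(k) < ∞, let β ∈ ℝ and n ∈ ℕ (n ≥ 1). Then Σ_{k=n}^∞ ψ(k) − (π/n)·Σ_{k=1}^∞ k·ψ(k+n) ≤ (1/2)·sup_{t∈ℝ} |Ψ_{β,n}(t + π/n) − Ψ_{β,n}(t)| ≤ Σ_{k=n}^∞ ψ(k). -/

import Mathlib

/-!
Writing `Δ(t) = Ψ_{β,n}(t + π/n) - Ψ_{β,n}(t)`, the upper bound is the trivial estimate
`|Ψ_{β,n}| ≤ Σ_{k ≥ n} ψ(k)`. For the lower bound pick `t₀ ∈ [-π/n, 0]` with `n t₀ - βπ/2 ∈ πℤ`.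
At `t₀` and `t₀ + π/n` the phase of the `k + n`-th term is `k t + mπ` with consecutive
integers `m`, so `|Δ(t₀)| = |Σ_k ψ(k+n) (cos(k (t₀ + π/n)) + cos(k t₀))|`; both arguments have
modulus at most `kπ/n`, and `cos x ≥ 1 - |x|` gives the bound.
-/

open MeasureTheory Real Filter

noncomputable section

/-- The kernel `Ψ_{β,n}(t) = Σ_{k=n}^∞ ψ(k) cos(k t - βπ/2)`. -/
def PsiKerN (ψ : ℕ → ℝ) (β : ℝ) (n : ℕ) (t : ℝ) : ℝ :=
  ∑' k : ℕ, ψ (k + n) * Real.cos (((k + n : ℕ) : ℝ) * t - β * π / 2)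

lemma one_sub_abs_le_cos (x : ℝ) : 1 - |x| ≤ cos x := by
  rcases le_or_gt |x| 2 with h | h
  · have : x ^ 2 ≤ 2 * |x| := by nlinarith [sq_abs x, abs_nonneg x]
    linarith [one_sub_sq_div_two_le_cos (x := x)]
  · linarith [neg_one_le_cos x]

lemma norm_mul_cos_le {a : ℝ} (ha : 0 ≤ a) (x : ℝ) : ‖a * cos x‖ ≤ a := by
  simpa [abs_mul, abs_of_nonneg ha] using mul_le_mul_of_nonneg_left (abs_cos_le_one x) ha

lemma summable_of_summable_nat_mul {a : ℕ → ℝ} (ha : ∀ k, 0 ≤ a k)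
    (h : Summable fun k : ℕ => (k : ℝ) * a k) : Summable a := by
  refine (summable_nat_add_iff 1).mp <| ((summable_nat_add_iff 1).mpr h).of_nonneg_of_le
    (fun k => ha _) fun k => le_mul_of_one_le_left (ha _) ?_
  simp

lemma summable_nat_mul_comp_add {a : ℕ → ℝ} (ha : ∀ k, 0 ≤ a k)
    (h : Summable fun k : ℕ => (k : ℝ) * a k) (n : ℕ) :
    Summable fun k : ℕ => (k : ℝ) * a (k + n) :=
  ((summable_nat_add_iff n).mpr h).of_nonneg_of_le (fun k => mul_nonneg k.cast_nonneg (ha _))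
    fun k => mul_le_mul_of_nonneg_right (by simp) (ha _)

lemma tsum_sub_mul_tsum_le_tsum_mul_cos {a : ℕ → ℝ} (ha : ∀ k, 0 ≤ a k) (hs : Summable a)
    (hks : Summable fun k : ℕ => (k : ℝ) * a k) {x δ : ℝ} (hx : |x| ≤ δ) :
    ∑' k, a k - δ * ∑' k : ℕ, (k : ℝ) * a k ≤ ∑' k : ℕ, a k * cos (k * x) := by
  have hterm (k : ℕ) : a k - δ * ((k : ℝ) * a k) ≤ a k * cos (k * x) := by
    have : 1 - k * δ ≤ cos (k * x) := by
      refine le_trans ?_ (one_sub_abs_le_cos _)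
      rw [abs_mul, Nat.abs_cast]
      linarith [mul_le_mul_of_nonneg_left hx k.cast_nonneg]
    nlinarith [ha k]
  rw [← tsum_mul_left, ← hs.tsum_sub (hks.mul_left δ)]
  exact (hs.sub (hks.mul_left δ)).tsum_le_tsum hterm <|
    hs.of_norm_bounded fun k => norm_mul_cos_le (ha k) _

lemma exists_mul_sub_eq_int_mul_pi {a : ℝ} (ha : 0 < a) (c : ℝ) :
    ∃ t : ℝ, ∃ m : ℤ, -(π / a) ≤ t ∧ t ≤ 0 ∧ a * t - c = m * π := by
  refine ⟨(c / π - ⌈c / π⌉) * π / a, -⌈c / π⌉, ?_, ?_, ?_⟩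
  · rw [← neg_div, div_le_div_iff_of_pos_right ha]
    nlinarith [Int.ceil_lt_add_one (c / π), pi_pos]
  · exact div_nonpos_of_nonpos_of_nonneg
      (mul_nonpos_of_nonpos_of_nonneg (by linarith [Int.le_ceil (c / π)]) pi_pos.le) ha.le
  · field_simp
    push_cast
    ring

section PsiKerN

variable {ψ : ℕ → ℝ} {n : ℕ}

lemma abs_PsiKerN_le (hψ : ∀ k, 0 ≤ ψ k) (hs : Summable fun k => ψ (k + n)) (β t : ℝ) :
    |PsiKerN ψ β n t| ≤ ∑' k, ψ (k + n) := by
  rw [← Real.norm_eq_abs]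
  exact tsum_of_norm_bounded hs.hasSum fun k => norm_mul_cos_le (hψ _) _

lemma PsiKerN_eq_of_phase_eq_int_mul_pi {β t : ℝ} {m : ℤ} (h : n * t - β * π / 2 = m * π) :
    PsiKerN ψ β n t = (-1) ^ m * ∑' k : ℕ, ψ (k + n) * cos (k * t) := by
  rw [PsiKerN, ← tsum_mul_left]
  congr 1 with k
  rw [mul_left_comm, ← cos_add_int_mul_pi, ← h]
  push_cast
  ring_nf

lemma abs_PsiKerN_sub_le (hψ : ∀ k, 0 ≤ ψ k) (hs : Summable fun k => ψ (k + n)) (β s t : ℝ) :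
    |PsiKerN ψ β n s - PsiKerN ψ β n t| ≤ 2 * ∑' k, ψ (k + n) := by
  have hs' := abs_PsiKerN_le hψ hs β s
  have ht := abs_PsiKerN_le hψ hs β t
  exact (abs_sub _ _).trans (by linarith)

lemma abs_PsiKerN_shift_sub_eq (hn : (n : ℝ) ≠ 0) {β t : ℝ} {m : ℤ}
    (h : n * t - β * π / 2 = m * π) :
    |PsiKerN ψ β n (t + π / n) - PsiKerN ψ β n t| =
      |∑' k : ℕ, ψ (k + n) * cos (k * (t + π / n)) + ∑' k : ℕ, ψ (k + n) * cos (k * t)| := by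
  have h' : n * (t + π / n) - β * π / 2 = ((m + 1 : ℤ) : ℝ) * π := by
    rw [mul_add, mul_div_cancel₀ _ hn]
    push_cast
    linarith
  rw [PsiKerN_eq_of_phase_eq_int_mul_pi h, PsiKerN_eq_of_phase_eq_int_mul_pi h',
    zpow_add_one₀ (by norm_num),
    show ∀ a b c : ℝ, a * -1 * b - a * c = -(a * (b + c)) by intros; ring,
    abs_neg, abs_mul, abs_neg_one_zpow, one_mul]

lemma exists_tsum_sub_le_abs_PsiKerN_shift_sub (hψ : ∀ k, 0 ≤ ψ k) (hn : 0 < (n : ℝ))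
    (hs : Summable fun k => ψ (k + n)) (hks : Summable fun k : ℕ => (k : ℝ) * ψ (k + n))
    (β : ℝ) : ∃ t₀ : ℝ, 2 * ∑' k, ψ (k + n) - 2 * (π / n) * ∑' k : ℕ, (k : ℝ) * ψ (k + n) ≤
      |PsiKerN ψ β n (t₀ + π / n) - PsiKerN ψ β n t₀| := by
  obtain ⟨t₀, m, ht₀, ht₀', hphase⟩ := exists_mul_sub_eq_int_mul_pi hn (β * π / 2)
  refine ⟨t₀, ?_⟩
  rw [abs_PsiKerN_shift_sub_eq hn.ne' hphase]
  have hA := tsum_sub_mul_tsum_le_tsum_mul_cos (fun k => hψ (k + n)) hs hks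
    (x := t₀ + π / n) (δ := π / n) (by rw [abs_le]; constructor <;> linarith)
  have hB := tsum_sub_mul_tsum_le_tsum_mul_cos (fun k => hψ (k + n)) hs hks
    (x := t₀) (δ := π / n) (by rw [abs_le]; constructor <;> linarith)
  linarith [le_abs_self (∑' k : ℕ, ψ (k + n) * cos (k * (t₀ + π / n))
    + ∑' k : ℕ, ψ (k + n) * cos (k * t₀))]

end PsiKerN

theorem PsiKerN_shift_norm_bounds (ψ : ℕ → ℝ) (hψ : ∀ k, 0 ≤ ψ k)
    (hsum : Summable (fun k : ℕ => (k : ℝ) * ψ k)) (β : ℝ) (n : ℕ) (hn : 1 ≤ n) :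
    (∑' k : ℕ, ψ (k + n)) - (π / (n : ℝ)) * (∑' k : ℕ, ((k : ℝ) + 1) * ψ (k + 1 + n)) ≤
        (1 / 2) * (⨆ t : ℝ, |PsiKerN ψ β n (t + π / (n : ℝ)) - PsiKerN ψ β n t|) ∧
      (1 / 2) * (⨆ t : ℝ, |PsiKerN ψ β n (t + π / (n : ℝ)) - PsiKerN ψ β n t|) ≤
        ∑' k : ℕ, ψ (k + n) := by
  have hn0 : (0 : ℝ) < n := by exact_mod_cast hn
  have hs : Summable fun k => ψ (k + n) :=
    (summable_nat_add_iff n).mpr (summable_of_summable_nat_mul hψ hsum)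
  have hks := summable_nat_mul_comp_add hψ hsum n
  have hbound (t : ℝ) := abs_PsiKerN_sub_le hψ hs β (t + π / n) t
  have hreindex : ∑' k : ℕ, (k : ℝ) * ψ (k + n) = ∑' k : ℕ, ((k : ℝ) + 1) * ψ (k + 1 + n) := by
    rw [hks.tsum_eq_zero_add]
    simp
  obtain ⟨t₀, ht₀⟩ := exists_tsum_sub_le_abs_PsiKerN_shift_sub hψ hn0 hs hks β
  have hsup := le_ciSup ⟨_, Set.forall_mem_range.mpr hbound⟩ t₀
  constructor
  · rw [← hreindex]
    linarith
  · linarith [Real.iSup_le hbound (mul_nonneg zero_le_two (tsum_nonneg fun k => hψ (k + n)))]
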